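/- arXiv:1912.03244 — 4 statements merged into one kernel-verified Lean document; each statement's English description precedes it below -/
import Mathlib

section
/- Let Ω be a finite nonempty set and let μ, ν be probability measures on Ω with μ(ω) > 0 and ν(ω) > 0 for every ω ∈ Ω. Set ρ = max_{ω∈Ω} max{ μ(ω)/ν(ω), ν(ω)/μ(ω) }. Then ∑_{ω∈Ω} √(μ(ω)ν(ω)) ≥ 1 − (1/2)(√ρ − 1)². -/
/-!
Expanding the squares, `∑ (√μ - √ν)² = 2 - 2 ∑ √(μ ν)`, so it suffices to bound the squared
Hellinger distance by `(√ρ - 1)²`. Pointwise, if `a ≤ b ≤ ρ a` then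
`0 ≤ √b - √a ≤ (√ρ - 1) √a`, so `(√a - √b)² ≤ (√ρ - 1)² min a b ≤ (√ρ - 1)² (a + b) / 2`,
and the weights `(μ ω + ν ω) / 2` sum to one.
-/

open Finset Real

lemma sqrt_sub_sqrt_sq_le_of_le_mul {a b ρ : ℝ} (ha : 0 ≤ a) (hab : a ≤ b) (hb : b ≤ ρ * a) :
    (√b - √a) ^ 2 ≤ (√ρ - 1) ^ 2 * a := by
  have hsqrt : √b ≤ √ρ * √a := by
    rw [← sqrt_mul' ρ ha]
    exact sqrt_le_sqrt hb
  calc (√b - √a) ^ 2 ≤ ((√ρ - 1) * √a) ^ 2 :=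
        pow_le_pow_left₀ (sub_nonneg.2 (sqrt_le_sqrt hab)) (by linarith) 2
    _ = (√ρ - 1) ^ 2 * a := by rw [mul_pow, sq_sqrt ha]

lemma sqrt_sub_sqrt_sq_le_of_ratio_le {a b ρ : ℝ} (ha : 0 ≤ a) (hb : 0 ≤ b)
    (hab : a ≤ ρ * b) (hba : b ≤ ρ * a) :
    (√a - √b) ^ 2 ≤ (√ρ - 1) ^ 2 * ((a + b) / 2) := by
  rcases le_total a b with h | h
  · calc (√a - √b) ^ 2 = (√b - √a) ^ 2 := by ring
      _ ≤ (√ρ - 1) ^ 2 * a := sqrt_sub_sqrt_sq_le_of_le_mul ha h hba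
      _ ≤ (√ρ - 1) ^ 2 * ((a + b) / 2) := by gcongr; linarith
  · calc (√a - √b) ^ 2 ≤ (√ρ - 1) ^ 2 * b := sqrt_sub_sqrt_sq_le_of_le_mul hb h hab
      _ ≤ (√ρ - 1) ^ 2 * ((a + b) / 2) := by gcongr; linarith

lemma sqrt_sub_sqrt_sq_eq {a b : ℝ} (ha : 0 ≤ a) (hb : 0 ≤ b) :
    (√a - √b) ^ 2 = a + b - 2 * √(a * b) := by
  rw [sub_sq, sqrt_mul ha, sq_sqrt ha, sq_sqrt hb]
  ring

lemma sum_sqrt_sub_sqrt_sq {ι : Type*} (s : Finset ι) {μ ν : ι → ℝ}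
    (hμ : ∀ i ∈ s, 0 ≤ μ i) (hν : ∀ i ∈ s, 0 ≤ ν i) :
    ∑ i ∈ s, (√(μ i) - √(ν i)) ^ 2 =
      ∑ i ∈ s, μ i + ∑ i ∈ s, ν i - 2 * ∑ i ∈ s, √(μ i * ν i) := by
  rw [sum_congr rfl fun i hi => sqrt_sub_sqrt_sq_eq (hμ i hi) (hν i hi),
    sum_sub_distrib, sum_add_distrib, mul_sum]

lemma sum_sqrt_sub_sqrt_sq_le {ι : Type*} (s : Finset ι) {μ ν : ι → ℝ} {ρ : ℝ}
    (hμ : ∀ i ∈ s, 0 ≤ μ i) (hν : ∀ i ∈ s, 0 ≤ ν i)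
    (hμν : ∀ i ∈ s, μ i ≤ ρ * ν i) (hνμ : ∀ i ∈ s, ν i ≤ ρ * μ i) :
    ∑ i ∈ s, (√(μ i) - √(ν i)) ^ 2 ≤ (√ρ - 1) ^ 2 * ((∑ i ∈ s, μ i + ∑ i ∈ s, ν i) / 2) := by
  rw [← sum_add_distrib, sum_div, mul_sum]
  exact sum_le_sum fun i hi =>
    sqrt_sub_sqrt_sq_le_of_ratio_le (hμ i hi) (hν i hi) (hμν i hi) (hνμ i hi)

/-- **Hellinger integral lower bound.**
Let `Ω` be a finite nonempty set and `μ, ν` probability measures on `Ω` with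
`μ ω > 0` and `ν ω > 0` for every `ω`.  With
`ρ = max_{ω} max (μ ω / ν ω) (ν ω / μ ω)`, the Hellinger integral satisfies
`∑ ω, √(μ ω * ν ω) ≥ 1 - (1/2) * (√ρ - 1)^2`. -/
theorem hellinger_lower_bound {Ω : Type*} [Fintype Ω] [Nonempty Ω]
    (μ ν : Ω → ℝ)
    (hμpos : ∀ ω, 0 < μ ω) (hνpos : ∀ ω, 0 < ν ω)
    (hμsum : ∑ ω, μ ω = 1) (hνsum : ∑ ω, ν ω = 1)
    (ρ : ℝ)
    (hρ : ρ = (Finset.univ : Finset Ω).sup' Finset.univ_nonempty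
      (fun ω => max (μ ω / ν ω) (ν ω / μ ω))) :
    1 - (1 / 2) * (Real.sqrt ρ - 1) ^ 2 ≤ ∑ ω, Real.sqrt (μ ω * ν ω) := by
  have hmax_le (ω : Ω) : max (μ ω / ν ω) (ν ω / μ ω) ≤ ρ :=
    hρ ▸ le_sup' (fun ω => max (μ ω / ν ω) (ν ω / μ ω)) (mem_univ ω)
  have hμν (ω : Ω) (_ : ω ∈ univ) : μ ω ≤ ρ * ν ω :=
    (div_le_iff₀ (hνpos ω)).1 ((le_max_left _ _).trans (hmax_le ω))
  have hνμ (ω : Ω) (_ : ω ∈ univ) : ν ω ≤ ρ * μ ω :=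
    (div_le_iff₀ (hμpos ω)).1 ((le_max_right _ _).trans (hmax_le ω))
  have hμ (ω : Ω) (_ : ω ∈ univ) : 0 ≤ μ ω := (hμpos ω).le
  have hν (ω : Ω) (_ : ω ∈ univ) : 0 ≤ ν ω := (hνpos ω).le
  have hdist := sum_sqrt_sub_sqrt_sq_le univ hμ hν hμν hνμ
  rw [sum_sqrt_sub_sqrt_sq univ hμ hν, hμsum, hνsum] at hdist
  linarith
end

section
/- Given any real λ with 1 < λ < (√2 + 1)², there exists K > 0 such that for every n ≥ 1 and all reals ρ_1, …, ρ_n with 1 ≤ ρ_i ≤ λ for each i, one has ∏_{i=1}^{n} ( 1 − (1/2)(√ρ_i − 1)² )² ≥ 1 − ∑_{i=1}^{n} ( (log ρ_i)²/4 + K (log ρ_i)³ ). -/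
/-!
Put `s = √ρ`, `t = s - 1` and `L = log s`, so that `log ρ = 2L`. The factor `1 - t² / 2` lies in
`[-1, 1]` as long as `t ≤ 2`, which the bound on `λ` guarantees; hence the Weierstrass product
inequality `∏ aᵢ ≥ 1 - ∑ (1 - aᵢ)` for `aᵢ ∈ [0, 1]` reduces the claim to the one-variable estimate
`1 - (1 - t² / 2)² ≤ t² ≤ s² L² = L² + L² t (s + 1) ≤ L² + √λ (√λ + 1) L³`,
where `t ≤ s L` is `log s ≥ 1 - 1 / s`.
-/

open Real Finset

theorem Finset.one_sub_sum_one_sub_le_prod {ι R : Type*} [CommRing R] [PartialOrder R]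
    [IsOrderedRing R] (s : Finset ι) (a : ι → R) (h0 : ∀ i ∈ s, 0 ≤ a i)
    (h1 : ∀ i ∈ s, a i ≤ 1) :
    1 - ∑ i ∈ s, (1 - a i) ≤ ∏ i ∈ s, a i := by
  induction s using Finset.cons_induction with
  | empty => simp
  | cons j s hj ih =>
    simp only [mem_cons, forall_eq_or_imp] at h0 h1
    have hP : ∏ i ∈ s, a i ≤ 1 := prod_le_one h0.2 h1.2
    rw [sum_cons, prod_cons]
    calc 1 - ((1 - a j) + ∑ i ∈ s, (1 - a i))
        ≤ 1 - ((1 - a j) + (1 - ∏ i ∈ s, a i)) := by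
          gcongr
          exact sub_le_comm.1 (ih h0.2 h1.2)
      _ = a j * ∏ i ∈ s, a i - (1 - a j) * (1 - ∏ i ∈ s, a i) := by ring
      _ ≤ a j * ∏ i ∈ s, a i :=
          sub_le_self _ (mul_nonneg (sub_nonneg.2 h1.1) (sub_nonneg.2 hP))

theorem Real.sub_one_le_mul_log {x : ℝ} (hx : 0 < x) : x - 1 ≤ x * log x := by
  have := mul_le_mul_of_nonneg_left (one_sub_inv_le_log_of_pos hx) hx.le
  rwa [mul_sub, mul_one, mul_inv_cancel₀ hx.ne'] at this

theorem sq_one_sub_half_sq_le_one {t : ℝ} (ht : |t| ≤ 2) : (1 - 1 / 2 * t ^ 2) ^ 2 ≤ 1 := by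
  have ht2 : t ^ 2 ≤ 4 := by nlinarith [sq_abs t, abs_nonneg t]
  nlinarith [sq_nonneg t]

theorem one_sub_sq_one_sub_half_sq_le {s M : ℝ} (hs : 1 ≤ s) (hsM : s ≤ M) :
    1 - (1 - 1 / 2 * (s - 1) ^ 2) ^ 2 ≤ log s ^ 2 + M * (M + 1) * log s ^ 3 := by
  have hL : 0 ≤ log s := log_nonneg hs
  have ht : s - 1 ≤ s * log s := sub_one_le_mul_log (by linarith)
  have htM : (s - 1) * (s + 1) ≤ M * log s * (M + 1) :=
    mul_le_mul (ht.trans (mul_le_mul_of_nonneg_right hsM hL)) (by linarith) (by linarith)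
      (by nlinarith)
  calc 1 - (1 - 1 / 2 * (s - 1) ^ 2) ^ 2 ≤ (s - 1) ^ 2 := by nlinarith [sq_nonneg ((s - 1) ^ 2)]
    _ ≤ (s * log s) ^ 2 := pow_le_pow_left₀ (by linarith) ht 2
    _ = log s ^ 2 + log s ^ 2 * ((s - 1) * (s + 1)) := by ring
    _ ≤ log s ^ 2 + log s ^ 2 * (M * log s * (M + 1)) := by gcongr
    _ = log s ^ 2 + M * (M + 1) * log s ^ 3 := by ring

theorem one_sub_sq_one_sub_half_sq_sqrt_le {ρ lam : ℝ} (hρ : 1 ≤ ρ) (hρlam : ρ ≤ lam) :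
    1 - (1 - 1 / 2 * (√ρ - 1) ^ 2) ^ 2 ≤
      log ρ ^ 2 / 4 + √lam * (√lam + 1) / 8 * log ρ ^ 3 := by
  have h := one_sub_sq_one_sub_half_sq_le (one_le_sqrt.2 hρ) (sqrt_le_sqrt hρlam)
  rw [log_sqrt (by linarith)] at h
  linarith

/-- Given `1 < λ < (√2 + 1)²`, there is `K > 0` such that whenever
`1 ≤ ρ i ≤ λ` for `1 ≤ i ≤ n`,
`∏_{i=1}^n (1 - (1/2)(√(ρ i) - 1)²)² ≥ 1 - ∑_{i=1}^n ((log ρ i)²/4 + K (log ρ i)³)`. -/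
theorem prod_one_sub_half_sq_ge {lam : ℝ} (hlam1 : 1 < lam)
    (hlam2 : lam < (Real.sqrt 2 + 1) ^ 2) :
    ∃ K > (0 : ℝ), ∀ n : ℕ, 1 ≤ n → ∀ ρ : ℕ → ℝ,
      (∀ i, 1 ≤ i → i ≤ n → 1 ≤ ρ i ∧ ρ i ≤ lam) →
      1 - ∑ i ∈ Finset.Icc 1 n,
          ((Real.log (ρ i)) ^ 2 / 4 + K * (Real.log (ρ i)) ^ 3) ≤
        ∏ i ∈ Finset.Icc 1 n, (1 - (1 / 2) * (Real.sqrt (ρ i) - 1) ^ 2) ^ 2 := by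
  have hsqrt_lam : √lam < 3 := by
    rw [sqrt_lt' (by norm_num)]
    nlinarith [sqrt_two_lt_three_halves, sqrt_nonneg 2]
  refine ⟨√lam * (√lam + 1) / 8, by positivity, fun n _ ρ hρ ↦ ?_⟩
  have hρ' : ∀ i ∈ Icc 1 n, 1 ≤ ρ i ∧ ρ i ≤ lam := fun i hi ↦ hρ i (mem_Icc.1 hi).1 (mem_Icc.1 hi).2
  refine le_trans ?_ (one_sub_sum_one_sub_le_prod _ _ (fun i _ ↦ sq_nonneg _) fun i hi ↦ ?_)
  · gcongr with i hi
    exact one_sub_sq_one_sub_half_sq_sqrt_le (hρ' i hi).1 (hρ' i hi).2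
  · have hs : 1 ≤ √(ρ i) := one_le_sqrt.2 (hρ' i hi).1
    have hs' : √(ρ i) ≤ √lam := sqrt_le_sqrt (hρ' i hi).2
    exact sq_one_sub_half_sq_le_one (abs_le.2 ⟨by linarith, by linarith⟩)
end

section
/- Let g ∈ 𝒢 be positive and continuous, and let B = (b_n)_{n≥1} be a sequence of positive integers. Then for every n ≥ 1 such that ρ_{[0, B_{n−1}]}(g) ≤ (1+√2)², one has d_n(g,B) ≤ √( 1 − ∏_{i=B_{n−1}}^{B_n − 1} ( 1 − (1/2)(√ρ_{[0,i]}(g) − 1)² )² ). -/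
open Filter Topology MeasureTheory

noncomputable section

/-- Prepend a symbol: `(cons s x) 0 = s` and `(cons s x) (i+1) = x i`. -/
def cons {S : Type*} (s : S) (x : ℕ → S) : ℕ → S := fun n =>
  match n with
  | 0 => s
  | Nat.succ k => x k

/-- Membership in the class `𝒢`: `g` is a (bounded) Borel function with
`g ≥ 0` and `∑_{s ∈ S} g (s x) = 1` for every `x ∈ X₊ = S^{ℕ}`. -/
def MemG {S : Type*} [Fintype S] [MeasurableSpace S] (g : (ℕ → S) → ℝ) : Prop :=
  Measurable g ∧ (∀ x, 0 ≤ g x) ∧ ∀ x : ℕ → S, ∑ s : S, g (cons s x) = 1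

/-- The left shift `T` on `X = S^{ℤ}`. -/
def shiftZ {S : Type*} (y : ℤ → S) : ℤ → S := fun i => y (i + 1)

/-- The natural extension `g̃ : S^{ℤ} → ℝ` of `g : S^{ℕ} → ℝ`. -/
def gtilde {S : Type*} (g : (ℕ → S) → ℝ) (y : ℤ → S) : ℝ :=
  g fun n : ℕ => y (n : ℤ)

/-- Replace the coordinates of `x` in `[m, n]` by the configuration `ζ`. -/
def patch {S : Type*} (m n : ℤ) (ζ : {i : ℤ // i ∈ Finset.Icc m n} → S)
    (x : ℤ → S) : ℤ → S :=
  fun j => if h : j ∈ Finset.Icc m n then ζ ⟨j, h⟩ else x j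

/-- `π^g_{[m,n]}([ζ] | x) = ∏_{i=m}^{n} g̃(T^i z)` where `z` agrees with `ζ` on
`[m,n]` and with `x` elsewhere. -/
def piCond {S : Type*} (g : (ℕ → S) → ℝ) (m n : ℤ)
    (ζ : {i : ℤ // i ∈ Finset.Icc m n} → S) (x : ℤ → S) : ℝ :=
  ∏ i ∈ Finset.Icc m n, gtilde g (fun j => patch m n ζ x (j + i))

/-- Partial sums `B_n = b_1 + ⋯ + b_n` (with `B_0 = 0`). -/
def Bsum (b : ℕ → ℕ) (n : ℕ) : ℕ := ∑ k ∈ Finset.Icc 1 n, b k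

/-- Left endpoint of `J_n = [1 - B_n, -B_{n-1}]`. -/
def Jlo (b : ℕ → ℕ) (n : ℕ) : ℤ := 1 - (Bsum b n : ℤ)

/-- Right endpoint of `J_n = [1 - B_n, -B_{n-1}]`. -/
def Jhi (b : ℕ → ℕ) (n : ℕ) : ℤ := -(Bsum b (n - 1) : ℤ)

/-- `d_n(g,B) = sup { (1/2) ∑_{ζ ∈ S^{J_n}} |π^g_{J_n}([ζ]|x) - π^g_{J_n}([ζ]|y)| :
x_i = y_i for all i ∈ [1 - B_{n-1}, 0] }`. -/
def dSeq {S : Type*} [Fintype S] [DecidableEq S]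
    (g : (ℕ → S) → ℝ) (b : ℕ → ℕ) (n : ℕ) : ℝ :=
  sSup {r : ℝ | ∃ x y : ℤ → S,
    (∀ i : ℤ, 1 - (Bsum b (n - 1) : ℤ) ≤ i → i ≤ 0 → x i = y i) ∧
    r = (1 / 2) * ∑ ζ : {i : ℤ // i ∈ Finset.Icc (Jlo b n) (Jhi b n)} → S,
      |piCond g (Jlo b n) (Jhi b n) ζ x - piCond g (Jlo b n) (Jhi b n) ζ y|}

/-- `ρ_{[0,n]}(f) = sup { f x / f y : x_i = y_i for 0 ≤ i ≤ n }` (for `f` on `X₊`). -/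
def rhoVar {S : Type*} (f : (ℕ → S) → ℝ) (n : ℕ) : ℝ :=
  sSup {r : ℝ | ∃ x y : ℕ → S, (∀ i ≤ n, x i = y i) ∧ r = f x / f y}


/-! `d_n` is a supremum of total-variation distances between the two laws `π(· | x)`, `π(· | y)`
on `S^{J_n}`, and total variation is at most `√(1 - BC²)`, `BC` the Bhattacharyya coefficient.
Peeling off the leftmost site `m` of `J_n`, each law factors as the one-site kernel `g̃(T^m ·)`
times the law on the remaining sites. The kernels for `x` and `y` have likelihood ratio at most
`ρ_{[0,-m]}(g)`, since the configurations they see agree on `[m + 1, 0]`, and two distributions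
with likelihood ratio at most `ρ` have `BC ≥ 2√ρ / (ρ + 1) ≥ 1 - (√ρ - 1)² / 2`. So `BC` dominates
the product of these factors; `ρ ≤ (1 + √2)²` keeps them nonnegative along the chain. -/

open Finset hiding cons
open Function

theorem Int.induction_down_of_forall_lt {n : ℤ} {P : ℤ → Prop} (base : ∀ m, n < m → P m)
    (step : ∀ m ≤ n, P (m + 1) → P m) (m : ℤ) : P m := by
  rcases lt_or_ge n m with h | h
  · exact base m h
  · exact Int.leInductionDown (m := n + 1) (motive := fun k _ => P k) (base _ (by omega))
      (fun k hk ih => step (k - 1) (by omega) (by rwa [sub_add_cancel])) m (by omega)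

theorem prod_Icc_neg_toNat {M : Type*} [CommMonoid M] (f : ℕ → M) {a b : ℕ} (hb : 0 < b) :
    ∏ i ∈ Icc (1 - (b : ℤ)) (-(a : ℤ)), f (-i).toNat = ∏ i ∈ Icc a (b - 1), f i :=
  prod_nbij' (fun i => (-i).toNat) (fun j => -(j : ℤ))
    (fun i hi => by simp only [mem_Icc] at hi ⊢; omega)
    (fun j hj => by simp only [mem_Icc] at hj ⊢; omega)
    (fun i hi => by simp only [mem_Icc] at hi; omega)
    (fun j _ => by omega) (fun _ _ => rfl)

theorem one_sub_half_sq_sqrt_sub_one_nonneg {ρ : ℝ} (h : ρ ≤ (1 + √2) ^ 2) :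
    0 ≤ 1 - 1 / 2 * (√ρ - 1) ^ 2 := by
  have hle : √ρ ≤ 1 + √2 := (Real.sqrt_le_sqrt h).trans_eq (Real.sqrt_sq (by positivity))
  have hge : 0 ≤ √2 + √ρ - 1 := by linarith [Real.sqrt_nonneg ρ, Real.one_lt_sqrt_two]
  nlinarith [mul_nonneg (sub_nonneg.2 hle) hge, Real.sq_sqrt (zero_le_two : (0 : ℝ) ≤ 2)]

section Bhattacharyya

variable {ι : Type*} [Fintype ι] {p q : ι → ℝ}

def bhattacharyya (p q : ι → ℝ) : ℝ := ∑ i, √(p i * q i)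

theorem half_sum_abs_sub_le_sqrt_one_sub_bhattacharyya_sq (hp : ∀ i, 0 ≤ p i)
    (hq : ∀ i, 0 ≤ q i) (hp1 : ∑ i, p i = 1) (hq1 : ∑ i, q i = 1) :
    1 / 2 * ∑ i, |p i - q i| ≤ √(1 - bhattacharyya p q ^ 2) := by
  have hsub : ∑ i, (√(p i) - √(q i)) ^ 2 = 2 - 2 * bhattacharyya p q := by
    simp only [sub_sq, Real.sq_sqrt (hp _), Real.sq_sqrt (hq _), sum_add_distrib,
      sum_sub_distrib, mul_assoc, ← mul_sum, hp1, hq1, bhattacharyya, Real.sqrt_mul (hp _)]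
    ring
  have hadd : ∑ i, (√(p i) + √(q i)) ^ 2 = 2 + 2 * bhattacharyya p q := by
    simp only [add_sq, Real.sq_sqrt (hp _), Real.sq_sqrt (hq _), sum_add_distrib,
      mul_assoc, ← mul_sum, hp1, hq1, bhattacharyya, Real.sqrt_mul (hp _)]
    ring
  have habs : ∀ i, |√(p i) - √(q i)| * (√(p i) + √(q i)) = |p i - q i| := fun i => by
    rw [← abs_of_nonneg (by positivity : 0 ≤ √(p i) + √(q i)), ← abs_mul]
    congr 1
    linear_combination Real.sq_sqrt (hp i) - Real.sq_sqrt (hq i)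
  have hcs := sum_mul_sq_le_sq_mul_sq univ (fun i => |√(p i) - √(q i)|)
    (fun i => √(p i) + √(q i))
  simp only [sq_abs, habs, hsub, hadd] at hcs
  apply Real.le_sqrt_of_sq_le
  nlinarith

theorem one_sub_half_sq_le_bhattacharyya {ρ : ℝ} (hp1 : ∑ i, p i = 1) (hq1 : ∑ i, q i = 1)
    (hpq : ∀ i, p i ≤ ρ * q i) (hqp : ∀ i, q i ≤ ρ * p i) :
    1 - 1 / 2 * (√ρ - 1) ^ 2 ≤ bhattacharyya p q := by
  have hρ : 1 ≤ ρ := by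
    calc 1 = ∑ i, p i := hp1.symm
      _ ≤ ∑ i, ρ * q i := sum_le_sum fun i _ => hpq i
      _ = ρ := by rw [← mul_sum, hq1, mul_one]
  set t := √ρ
  have ht : 1 ≤ t := Real.one_le_sqrt.2 hρ
  have ht2 : t ^ 2 = ρ := Real.sq_sqrt (by linarith)
  have hpoint : ∀ i, t * (p i + q i) ≤ (ρ + 1) * √(p i * q i) := fun i => by
    rw [← Real.sqrt_sq (by positivity : 0 ≤ ρ + 1), ← Real.sqrt_mul (by positivity)]
    apply Real.le_sqrt_of_sq_le
    rw [mul_pow, ht2]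
    nlinarith [mul_nonneg (sub_nonneg.2 (hpq i)) (sub_nonneg.2 (hqp i))]
  have h2t : 2 * t ≤ (ρ + 1) * bhattacharyya p q := by
    calc 2 * t = ∑ i, t * (p i + q i) := by rw [← mul_sum, sum_add_distrib, hp1, hq1]; ring
      _ ≤ ∑ i, (ρ + 1) * √(p i * q i) := sum_le_sum fun i _ => hpoint i
      _ = (ρ + 1) * bhattacharyya p q := (mul_sum _ _ _).symm
  -- `(1 - (t - 1)² / 2) (t² + 1) = 2 t - (t - 1)² (t² - 1) / 2`
  have hfactor : (1 - 1 / 2 * (t - 1) ^ 2) * (ρ + 1) ≤ 2 * t := by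
    rw [← ht2]
    nlinarith [mul_nonneg (sq_nonneg (t - 1)) (by nlinarith : (0 : ℝ) ≤ t ^ 2 - 1)]
  rw [mul_comm (ρ + 1)] at h2t
  exact le_of_mul_le_mul_right (hfactor.trans h2t) (by positivity)

end Bhattacharyya

section Configurations

variable {S : Type*} {m n : ℤ}

def extendLeft (s : S) (ζ : {i : ℤ // i ∈ Icc (m + 1) n} → S) :
    {i : ℤ // i ∈ Icc m n} → S :=
  fun i => if h : i.1 ∈ Icc (m + 1) n then ζ ⟨i.1, h⟩ else s

def extendLeftEquiv (h : m ≤ n) :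
    S × ({i : ℤ // i ∈ Icc (m + 1) n} → S) ≃ ({i : ℤ // i ∈ Icc m n} → S) where
  toFun p := extendLeft p.1 p.2
  invFun ζ := (ζ ⟨m, by simp [h]⟩, fun i => ζ ⟨i.1, Icc_subset_Icc_left (by omega) i.2⟩)
  left_inv p := by simp [extendLeft]
  right_inv ζ := by
    funext i
    by_cases hi : i.1 ∈ Icc (m + 1) n
    · simp [extendLeft, hi]
    · have : i.1 = m := by have := mem_Icc.1 i.2; simp only [mem_Icc] at hi; omega
      simp [extendLeft, ← this]

theorem sum_eq_sum_sum_extendLeft [Fintype S] {M : Type*} [AddCommMonoid M] (h : m ≤ n)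
    (F : ({i : ℤ // i ∈ Icc m n} → S) → M) :
    ∑ ζ, F ζ = ∑ ζ, ∑ s, F (extendLeft s ζ) := by
  rw [← (extendLeftEquiv h).sum_comp, Fintype.sum_prod_type_right]
  rfl

theorem patch_extendLeft (h : m ≤ n) (s : S) (ζ : {i : ℤ // i ∈ Icc (m + 1) n} → S)
    (x : ℤ → S) : patch m n (extendLeft s ζ) x = update (patch (m + 1) n ζ x) m s := by
  funext j
  by_cases hj : j = m
  · subst hj
    simp [patch, extendLeft, h]
  · rw [update_of_ne hj]
    simp only [patch, extendLeft, mem_Icc]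
    split_ifs <;> first | rfl | omega

theorem piCond_extendLeft (g : (ℕ → S) → ℝ) (h : m ≤ n) (s : S)
    (ζ : {i : ℤ // i ∈ Icc (m + 1) n} → S) (x : ℤ → S) :
    piCond g m n (extendLeft s ζ) x =
      gtilde g (fun j => update (patch (m + 1) n ζ x) m s (j + m)) *
        piCond g (m + 1) n ζ x := by
  rw [piCond, piCond, ← mul_prod_Ioc_eq_prod_Icc h, ← Icc_add_one_left_eq_Ioc,
    patch_extendLeft h]
  congr 1
  refine prod_congr rfl fun i hi => congrArg g (funext fun k => update_of_ne ?_ _ _)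
  have := (mem_Icc.1 hi).1
  omega

theorem piCond_of_lt (g : (ℕ → S) → ℝ) (h : n < m) (ζ : {i : ℤ // i ∈ Icc m n} → S)
    (x : ℤ → S) : piCond g m n ζ x = 1 := by
  rw [piCond, Icc_eq_empty_of_lt h, prod_empty]

theorem piCond_nonneg {g : (ℕ → S) → ℝ} (hg : ∀ x, 0 ≤ g x)
    (ζ : {i : ℤ // i ∈ Icc m n} → S) (x : ℤ → S) : 0 ≤ piCond g m n ζ x :=
  prod_nonneg fun _ _ => hg _

theorem sum_gtilde_update [Fintype S] {g : (ℕ → S) → ℝ} (hg : ∀ x, ∑ s, g (cons s x) = 1)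
    (w : ℤ → S) (m : ℤ) : ∑ s, gtilde g (fun j => update w m s (j + m)) = 1 := by
  convert hg fun k => w (k + 1 + m) using 2 with s
  refine congrArg g (funext fun k => ?_)
  cases k with
  | zero => simp [cons]
  | succ k =>
    simp only [cons, update_of_ne (show ((k + 1 : ℕ) : ℤ) + m ≠ m by omega)]
    push_cast
    ring_nf

theorem gtilde_update_le_mul {g : (ℕ → S) → ℝ} {ρ : ℕ → ℝ}
    (hρ : ∀ N u v, (∀ i ≤ N, u i = v i) → g u ≤ ρ N * g v) {w w' : ℤ → S} {N : ℕ}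
    (hw : ∀ j, m < j → j ≤ m + N → w j = w' j) (s : S) :
    gtilde g (fun j => update w m s (j + m)) ≤
      ρ N * gtilde g (fun j => update w' m s (j + m)) :=
  hρ N _ _ fun k hk => by
    rcases Nat.eq_zero_or_pos k with rfl | hk0
    · simp
    · simp only [update_of_ne (show (k : ℤ) + m ≠ m by omega)]
      exact hw _ (by omega) (by omega)

variable [Fintype S] {g : (ℕ → S) → ℝ}

theorem sum_piCond (hg : ∀ x, ∑ s, g (cons s x) = 1) (x : ℤ → S) :
    ∑ ζ : {i : ℤ // i ∈ Icc m n} → S, piCond g m n ζ x = 1 := by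
  induction m using Int.induction_down_of_forall_lt (n := n) with
  | base m hm =>
    have : IsEmpty {i : ℤ // i ∈ Icc m n} := ⟨fun i => by have := mem_Icc.1 i.2; omega⟩
    simp [piCond_of_lt g hm]
  | step m hm ih =>
    rw [sum_eq_sum_sum_extendLeft hm]
    simp_rw [piCond_extendLeft g hm, ← sum_mul, sum_gtilde_update hg, one_mul]
    exact ih

theorem one_sub_half_sq_le_bhattacharyya_gtilde_update (hg : ∀ x, ∑ s, g (cons s x) = 1)
    {ρ : ℕ → ℝ} (hρ : ∀ N u v, (∀ i ≤ N, u i = v i) → g u ≤ ρ N * g v) {x y : ℤ → S}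
    (hxy : ∀ i, n < i → i ≤ 0 → x i = y i) (ζ : {i : ℤ // i ∈ Icc (m + 1) n} → S) :
    1 - 1 / 2 * (√(ρ (-m).toNat) - 1) ^ 2 ≤
      bhattacharyya (fun s => gtilde g (fun j => update (patch (m + 1) n ζ x) m s (j + m)))
        (fun s => gtilde g (fun j => update (patch (m + 1) n ζ y) m s (j + m))) := by
  have hagree : ∀ j, m < j → j ≤ m + (-m).toNat →
      patch (m + 1) n ζ x j = patch (m + 1) n ζ y j := by
    intro j hj₁ hj₂
    simp only [patch]
    split_ifs with hj
    · rfl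
    · exact hxy j (by simp only [mem_Icc] at hj; omega) (by omega)
  exact one_sub_half_sq_le_bhattacharyya (sum_gtilde_update hg _ m) (sum_gtilde_update hg _ m)
    (gtilde_update_le_mul hρ hagree)
    (gtilde_update_le_mul hρ fun j h₁ h₂ => (hagree j h₁ h₂).symm)

theorem prod_le_bhattacharyya_piCond (hg₀ : ∀ x, 0 ≤ g x) (hg : ∀ x, ∑ s, g (cons s x) = 1)
    {ρ : ℕ → ℝ} (hρ : ∀ N u v, (∀ i ≤ N, u i = v i) → g u ≤ ρ N * g v) {x y : ℤ → S}
    (hxy : ∀ i, n < i → i ≤ 0 → x i = y i)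
    (hc : ∀ i ∈ Icc m n, 0 ≤ 1 - 1 / 2 * (√(ρ (-i).toNat) - 1) ^ 2) :
    ∏ i ∈ Icc m n, (1 - 1 / 2 * (√(ρ (-i).toNat) - 1) ^ 2) ≤
      bhattacharyya (piCond g m n · x) (piCond g m n · y) := by
  induction m using Int.induction_down_of_forall_lt (n := n) with
  | base m hm =>
    have : IsEmpty {i : ℤ // i ∈ Icc m n} := ⟨fun i => by have := mem_Icc.1 i.2; omega⟩
    simp [bhattacharyya, piCond_of_lt g hm, Icc_eq_empty_of_lt hm]
  | step m hm ih =>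
    set c : ℤ → ℝ := fun i => 1 - 1 / 2 * (√(ρ (-i).toNat) - 1) ^ 2
    set K : (ℤ → S) → ({i : ℤ // i ∈ Icc (m + 1) n} → S) → S → ℝ :=
      fun z ζ s => gtilde g (fun j => update (patch (m + 1) n ζ z) m s (j + m))
    have hstep : ∀ ζ, c m ≤ bhattacharyya (K x ζ) (K y ζ) :=
      one_sub_half_sq_le_bhattacharyya_gtilde_update hg hρ hxy
    calc ∏ i ∈ Icc m n, c i = c m * ∏ i ∈ Icc (m + 1) n, c i := by
          rw [← mul_prod_Ioc_eq_prod_Icc hm, Icc_add_one_left_eq_Ioc]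
      _ ≤ c m * bhattacharyya (piCond g (m + 1) n · x) (piCond g (m + 1) n · y) :=
          mul_le_mul_of_nonneg_left
            (ih fun i hi => hc i (Icc_subset_Icc_left (by omega) hi)) (hc m (by simp [hm]))
      _ ≤ ∑ ζ, bhattacharyya (K x ζ) (K y ζ) *
            √(piCond g (m + 1) n ζ x * piCond g (m + 1) n ζ y) := by
          rw [bhattacharyya, mul_sum]
          exact sum_le_sum fun ζ _ => mul_le_mul_of_nonneg_right (hstep ζ) (Real.sqrt_nonneg _)
      _ = bhattacharyya (piCond g m n · x) (piCond g m n · y) := by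
          rw [bhattacharyya, sum_eq_sum_sum_extendLeft hm]
          refine sum_congr rfl fun ζ _ => ?_
          rw [bhattacharyya, sum_mul]
          refine sum_congr rfl fun s _ => ?_
          rw [piCond_extendLeft g hm, piCond_extendLeft g hm,
            ← Real.sqrt_mul (mul_nonneg (hg₀ _) (hg₀ _) : 0 ≤ K x ζ s * K y ζ s)]
          congr 1
          ring

theorem half_sum_abs_sub_piCond_le (hg₀ : ∀ x, 0 ≤ g x) (hg : ∀ x, ∑ s, g (cons s x) = 1)
    {ρ : ℕ → ℝ} (hρ : ∀ N u v, (∀ i ≤ N, u i = v i) → g u ≤ ρ N * g v) {x y : ℤ → S}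
    (hxy : ∀ i, n < i → i ≤ 0 → x i = y i)
    (hc : ∀ i ∈ Icc m n, 0 ≤ 1 - 1 / 2 * (√(ρ (-i).toNat) - 1) ^ 2) :
    1 / 2 * ∑ ζ : {i : ℤ // i ∈ Icc m n} → S, |piCond g m n ζ x - piCond g m n ζ y| ≤
      √(1 - (∏ i ∈ Icc m n, (1 - 1 / 2 * (√(ρ (-i).toNat) - 1) ^ 2)) ^ 2) := by
  refine (half_sum_abs_sub_le_sqrt_one_sub_bhattacharyya_sq (piCond_nonneg hg₀ · x)
    (piCond_nonneg hg₀ · y) (sum_piCond hg x) (sum_piCond hg y)).trans ?_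
  gcongr
  · exact prod_nonneg hc
  · exact prod_le_bhattacharyya_piCond hg₀ hg hρ hxy hc

end Configurations

section rhoVar

variable {S : Type*} {f : (ℕ → S) → ℝ}

theorem bddAbove_rhoVar_set
    (hf : BddAbove (Set.range fun p : (ℕ → S) × (ℕ → S) => f p.1 / f p.2)) (N : ℕ) :
    BddAbove {r : ℝ | ∃ x y : ℕ → S, (∀ i ≤ N, x i = y i) ∧ r = f x / f y} :=
  hf.mono <| by rintro _ ⟨x, y, -, rfl⟩; exact ⟨(x, y), rfl⟩

theorem le_rhoVar_mul
    (hf : BddAbove (Set.range fun p : (ℕ → S) × (ℕ → S) => f p.1 / f p.2))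
    {N : ℕ} {x y : ℕ → S} (hy : 0 < f y) (hxy : ∀ i ≤ N, x i = y i) :
    f x ≤ rhoVar f N * f y :=
  (div_le_iff₀ hy).1 <| le_csSup (bddAbove_rhoVar_set hf N) ⟨x, y, hxy, rfl⟩

theorem rhoVar_antitone [Nonempty S]
    (hf : BddAbove (Set.range fun p : (ℕ → S) × (ℕ → S) => f p.1 / f p.2)) :
    Antitone (rhoVar f) := fun N _ hNM =>
  csSup_le_csSup (bddAbove_rhoVar_set hf N)
    ⟨_, Classical.arbitrary _, Classical.arbitrary _, fun _ _ => rfl, rfl⟩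
    fun _ ⟨x, y, hxy, hr⟩ => ⟨x, y, fun i hi => hxy i (hi.trans hNM), hr⟩

end rhoVar

theorem dSeq_le_hellinger_general {S : Type*} [Fintype S] [DecidableEq S]
    [MeasurableSpace S] [TopologicalSpace S]
    (g : (ℕ → S) → ℝ) (hg : MemG g) (hgpos : ∀ x, 0 < g x) (hgcont : Continuous g)
    (b : ℕ → ℕ) (hb : ∀ n, 1 ≤ n → 0 < b n) :
    ∀ n : ℕ, 1 ≤ n → rhoVar g (Bsum b (n - 1)) ≤ (1 + Real.sqrt 2) ^ 2 →
      dSeq g b n ≤ Real.sqrt (1 - ∏ i ∈ Finset.Icc (Bsum b (n - 1)) (Bsum b n - 1),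
        (1 - (1 / 2) * (Real.sqrt (rhoVar g i) - 1) ^ 2) ^ 2) := by
  intro n hn hρ
  refine Real.sSup_le ?_ (Real.sqrt_nonneg _)
  rintro _ ⟨x, y, hxy, rfl⟩
  have : Nonempty S := ⟨x 0⟩
  have hbdd : BddAbove (Set.range fun p : (ℕ → S) × (ℕ → S) => g p.1 / g p.2) :=
    (isCompact_range ((hgcont.comp continuous_fst).div (hgcont.comp continuous_snd)
      fun p => (hgpos p.2).ne')).bddAbove
  have hB : 0 < Bsum b n := (hb n hn).trans_le
    (single_le_sum (fun _ _ => Nat.zero_le _) (mem_Icc.2 ⟨hn, le_rfl⟩))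
  rw [prod_pow, ← prod_Icc_neg_toNat (fun i => 1 - 1 / 2 * (√(rhoVar g i) - 1) ^ 2) hB]
  refine half_sum_abs_sub_piCond_le hg.2.1 hg.2.2 (fun N u v => le_rhoVar_mul hbdd (hgpos v))
    (fun i hi hi₀ => hxy i (by rw [Jhi] at hi; omega) hi₀) fun i hi => ?_
  refine one_sub_half_sq_sqrt_sub_one_nonneg ((rhoVar_antitone hbdd ?_).trans hρ)
  simp only [Jlo, Jhi, mem_Icc] at hi
  omega

/-- **Corollary.**  Let `g ∈ 𝒢` be positive and continuous and `B = (b_n)` a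
sequence of positive integers.  For every `n ≥ 1` with
`ρ_{[0,B_{n-1}]}(g) ≤ (1+√2)²`,
`d_n(g,B) ≤ √(1 - ∏_{i=B_{n-1}}^{B_n - 1} (1 - (1/2)(√(ρ_{[0,i]}(g)) - 1)²)²)`. -/
theorem dSeq_le_hellinger {S : Type*} [Fintype S] [DecidableEq S]
    [MeasurableSpace S] [TopologicalSpace S] [DiscreteTopology S] [BorelSpace S]
    (hS : 2 ≤ Fintype.card S)
    (g : (ℕ → S) → ℝ) (hg : MemG g) (hgpos : ∀ x, 0 < g x) (hgcont : Continuous g)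
    (b : ℕ → ℕ) (hb : ∀ n, 1 ≤ n → 0 < b n) :
    ∀ n : ℕ, 1 ≤ n → rhoVar g (Bsum b (n - 1)) ≤ (1 + Real.sqrt 2) ^ 2 →
      dSeq g b n ≤ Real.sqrt (1 - ∏ i ∈ Finset.Icc (Bsum b (n - 1)) (Bsum b n - 1),
        (1 - (1 / 2) * (Real.sqrt (rhoVar g i) - 1) ^ 2) ^ 2) :=
  dSeq_le_hellinger_general g hg hgpos hgcont b hb

end
end

section
/- Let g ∈ 𝒢 be positive and continuous. If lim_{n→∞} ∑_{i=⌈λ^{n−1}⌉}^{⌈λ^{n}⌉} (log ρ_{[0,i]}(g))² = 0 holds for some λ > 1, then lim_{n→∞} ∑_{i=⌈λ'^{n−1}⌉}^{⌈λ'^{n}⌉} (log ρ_{[0,i]}(g))² = 0 holds for every λ' > 1. -/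
/-! The theorem is a fact about nonnegative sequences: the `λ'`-block
`[⌈λ'^{m-1}⌉, ⌈λ'^m⌉]` is covered by `K + 1` consecutive `λ`-blocks, where `λ' ≤ λ^K`, and the
index of the first of them tends to infinity with `m`. -/

open Filter Topology MeasureTheory

noncomputable section

section GeomBlocks

variable {M : Type*} [AddCommMonoid M] [PartialOrder M] [IsOrderedAddMonoid M] {a : ℕ → M}

theorem sum_Icc_le_sum_Icc_add_sum_Icc (ha : ∀ i, 0 ≤ a i) (u v w : ℕ) :
    ∑ i ∈ Finset.Icc u w, a i ≤ ∑ i ∈ Finset.Icc u v, a i + ∑ i ∈ Finset.Icc v w, a i := by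
  have hcover : Finset.Icc u w ⊆ Finset.Icc u v ∪ Finset.Icc v w := by
    intro i
    simp only [Finset.mem_union, Finset.mem_Icc]
    omega
  calc ∑ i ∈ Finset.Icc u w, a i
      ≤ ∑ i ∈ Finset.Icc u v ∪ Finset.Icc v w, a i :=
        Finset.sum_le_sum_of_subset_of_nonneg hcover fun i _ _ => ha i
    _ ≤ ∑ i ∈ Finset.Icc u v ∪ Finset.Icc v w, a i +
          ∑ i ∈ Finset.Icc u v ∩ Finset.Icc v w, a i :=
        le_add_of_nonneg_right (Finset.sum_nonneg fun i _ => ha i)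
    _ = _ := Finset.sum_union_inter

theorem sum_Icc_le_sum_range_sum_Icc (ha : ∀ i, 0 ≤ a i) (b : ℕ → ℕ) (p k : ℕ) :
    ∑ i ∈ Finset.Icc (b p) (b (p + k + 1)), a i ≤
      ∑ j ∈ Finset.range (k + 1), ∑ i ∈ Finset.Icc (b (p + j)) (b (p + j + 1)), a i := by
  induction k with
  | zero => simp
  | succ k ih =>
    rw [Finset.sum_range_succ]
    exact (sum_Icc_le_sum_Icc_add_sum_Icc ha _ (b (p + k + 1)) _).trans (add_le_add ih le_rfl)

def geomBlockSum (a : ℕ → M) (lam : ℝ) (n : ℕ) : M :=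
  ∑ i ∈ Finset.Icc ⌈lam ^ (n - 1)⌉₊ ⌈lam ^ n⌉₊, a i

theorem geomBlockSum_le_sum_range (ha : ∀ i, 0 ≤ a i) {lam lam' : ℝ} (hlam : 1 ≤ lam)
    (hlam' : 1 ≤ lam') {K p m : ℕ} (hK : lam' ≤ lam ^ K) (hp : lam ^ p ≤ lam' ^ (m - 1))
    (hp' : lam' ^ (m - 1) < lam ^ (p + 1)) :
    geomBlockSum a lam' m ≤ ∑ j ∈ Finset.range (K + 1), geomBlockSum a lam (p + j + 1) := by
  have hupper : lam' ^ m ≤ lam ^ (p + K + 1) :=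
    calc lam' ^ m
        ≤ lam' ^ (m - 1) * lam' := by
          rw [← pow_succ]; exact pow_le_pow_right₀ hlam' (by omega)
      _ ≤ lam ^ (p + 1) * lam ^ K := by gcongr
      _ = lam ^ (p + K + 1) := by ring
  have hsub : Finset.Icc ⌈lam' ^ (m - 1)⌉₊ ⌈lam' ^ m⌉₊ ⊆
      Finset.Icc ⌈lam ^ p⌉₊ ⌈lam ^ (p + K + 1)⌉₊ :=
    Finset.Icc_subset_Icc (Nat.ceil_mono hp) (Nat.ceil_mono hupper)
  calc geomBlockSum a lam' m
      ≤ ∑ i ∈ Finset.Icc ⌈lam ^ p⌉₊ ⌈lam ^ (p + K + 1)⌉₊, a i :=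
        Finset.sum_le_sum_of_subset_of_nonneg hsub fun i _ _ => ha i
    _ ≤ _ := sum_Icc_le_sum_range_sum_Icc ha (fun n => ⌈lam ^ n⌉₊) p K

end GeomBlocks

theorem tendsto_geomBlockSum_of_tendsto {a : ℕ → ℝ} (ha : ∀ i, 0 ≤ a i) {lam lam' : ℝ}
    (hlam : 1 < lam) (hlam' : 1 < lam')
    (h : Tendsto (geomBlockSum a lam) atTop (𝓝 0)) :
    Tendsto (geomBlockSum a lam') atTop (𝓝 0) := by
  obtain ⟨K, hK⟩ := pow_unbounded_of_one_lt lam' hlam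
  choose p hp hp' using fun m : ℕ =>
    exists_nat_pow_near (one_le_pow₀ (n := m - 1) hlam'.le) hlam
  have hp_tendsto : Tendsto p atTop atTop := by
    refine tendsto_atTop.2 fun N => ?_
    have hbig : ∀ᶠ m : ℕ in atTop, lam ^ N ≤ lam' ^ (m - 1) :=
      ((tendsto_pow_atTop_atTop_of_one_lt hlam').comp
        (tendsto_sub_atTop_nat 1)).eventually_ge_atTop _
    filter_upwards [hbig] with m hm
    exact Nat.lt_succ_iff.1 ((pow_lt_pow_iff_right₀ hlam).1 (hm.trans_lt (hp' m)))
  have hshifted : Tendsto (fun q => ∑ j ∈ Finset.range (K + 1), geomBlockSum a lam (q + j + 1))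
      atTop (𝓝 0) := by
    simpa [add_assoc] using tendsto_finsetSum (Finset.range (K + 1)) fun j _ =>
      h.comp (tendsto_add_atTop_nat (j + 1))
  refine squeeze_zero (fun m => Finset.sum_nonneg fun i _ => ha i) (fun m => ?_)
    (hshifted.comp hp_tendsto)
  exact geomBlockSum_le_sum_range ha hlam.le hlam'.le hK.le (hp m) (hp' m)

theorem log_rho_sq_cond_indep_of_lambda_general {S : Type*}
    (g : (ℕ → S) → ℝ)
    (hyp : ∃ lam : ℝ, 1 < lam ∧ Tendsto (fun n : ℕ =>
      ∑ i ∈ Finset.Icc ⌈lam ^ (n - 1)⌉₊ ⌈lam ^ n⌉₊,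
        (Real.log (rhoVar g i)) ^ 2) atTop (𝓝 0)) :
    ∀ lam' : ℝ, 1 < lam' → Tendsto (fun n : ℕ =>
      ∑ i ∈ Finset.Icc ⌈lam' ^ (n - 1)⌉₊ ⌈lam' ^ n⌉₊,
        (Real.log (rhoVar g i)) ^ 2) atTop (𝓝 0) := by
  obtain ⟨lam, hlam, h⟩ := hyp
  exact fun lam' hlam' => tendsto_geomBlockSum_of_tendsto (fun i => sq_nonneg _) hlam hlam' h

/-- If `g ∈ 𝒢` is positive and continuous and
`∑_{i=⌈λ^{n-1}⌉}^{⌈λ^n⌉} (log ρ_{[0,i]}(g))² → 0` for some `λ > 1`, then the same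
holds for every `λ' > 1`. -/
theorem log_rho_sq_cond_indep_of_lambda {S : Type*} [Fintype S] [DecidableEq S]
    [MeasurableSpace S] [TopologicalSpace S] [DiscreteTopology S] [BorelSpace S]
    (hS : 2 ≤ Fintype.card S)
    (g : (ℕ → S) → ℝ) (hg : MemG g) (hgpos : ∀ x, 0 < g x) (hgcont : Continuous g)
    (hyp : ∃ lam : ℝ, 1 < lam ∧ Tendsto (fun n : ℕ =>
      ∑ i ∈ Finset.Icc ⌈lam ^ (n - 1)⌉₊ ⌈lam ^ n⌉₊,
        (Real.log (rhoVar g i)) ^ 2) atTop (𝓝 0)) :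
    ∀ lam' : ℝ, 1 < lam' → Tendsto (fun n : ℕ =>
      ∑ i ∈ Finset.Icc ⌈lam' ^ (n - 1)⌉₊ ⌈lam' ^ n⌉₊,
        (Real.log (rhoVar g i)) ^ 2) atTop (𝓝 0) :=
  log_rho_sq_cond_indep_of_lambda_general g hyp

end
end
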